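/- Let A and E be n×n real symmetric matrices, let λ ∈ ℝ with a unit vector u satisfying A ·ᵥ u = λ • u, and suppose every eigenvalue μ of A admitting an eigenvector orthogonal to u satisfies |μ − λ| ≥ δ for some δ > 0. If the ℓ²-operator norm satisfies ‖E‖ ≤ ε with 2ε < δ, then A + E has a unit eigenvector û whose eigenvalue λ̂ satisfies |λ̂ − λ| ≤ ε, and the angle between û and u satisfies √(1 − ⟨u, û⟩²) ≤ 2ε/δ; in particular min_{σ ∈ {−1,1}} ‖û − σ • u‖ ≤ 2√2 · ε/δ. -/

import Mathlib

/-!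
The residual of `u` for `A + E` is `E u`, of norm at most `ε`, so expanding it in an eigenbasis of
`A + E` yields an eigenpair `(λ̂, û)` with `|λ̂ - λ| ≤ ε`. Since `A` commutes with the projection
onto `u⊥`, the component `y = û - ⟨u, û⟩ u` satisfies `(A - λ̂) y = -(E û - ⟨u, E û⟩ u)`, of norm
at most `ε`. On `u⊥` the spectrum of `A` stays `δ - ε` away from `λ̂`, so `(δ - ε) ‖y‖ ≤ ε`,
and `‖y‖ = √(1 - ⟨u, û⟩²)` is the sine of the angle.
-/

open Matrix

attribute [local instance] Matrix.instL2OpNormedAddCommGroup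

open scoped RealInnerProductSpace

section UnitVector

variable {V : Type*} [NormedAddCommGroup V] [InnerProductSpace ℝ V] {u : V}

theorem inner_sub_inner_smul_of_norm_eq_one (hu : ‖u‖ = 1) (w : V) :
    ⟪u, w - ⟪u, w⟫ • u⟫ = 0 := by
  rw [inner_sub_right, real_inner_smul_right, real_inner_self_eq_norm_sq, hu]
  ring

theorem norm_sub_inner_smul_sq_of_norm_eq_one (hu : ‖u‖ = 1) (w : V) :
    ‖w - ⟪u, w⟫ • u‖ ^ 2 = ‖w‖ ^ 2 - ⟪u, w⟫ ^ 2 := by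
  rw [@norm_sub_sq_real, norm_smul, hu, real_inner_smul_right, real_inner_comm,
    Real.norm_eq_abs, mul_one, sq_abs]
  ring

theorem norm_sub_inner_smul_le_of_norm_eq_one (hu : ‖u‖ = 1) (w : V) :
    ‖w - ⟪u, w⟫ • u‖ ≤ ‖w‖ := by
  refine (pow_le_pow_iff_left₀ (norm_nonneg _) (norm_nonneg _) two_ne_zero).mp ?_
  rw [norm_sub_inner_smul_sq_of_norm_eq_one hu]
  linarith [sq_nonneg ⟪u, w⟫]

theorem min_norm_sub_norm_add_le_of_norm_eq_one {v : V} (hu : ‖u‖ = 1) (hv : ‖v‖ = 1) :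
    min ‖v - u‖ ‖v + u‖ ≤ √2 * √(1 - ⟪u, v⟫ ^ 2) := by
  have hc := abs_le.mp (by simpa [hu, hv] using abs_real_inner_le_norm u v)
  rw [← Real.sqrt_mul zero_le_two]
  rcases le_total 0 ⟪u, v⟫ with hc0 | hc0
  · refine (min_le_left _ _).trans (Real.le_sqrt_of_sq_le ?_)
    rw [@norm_sub_sq_real, hu, hv, real_inner_comm]
    nlinarith
  · refine (min_le_right _ _).trans (Real.le_sqrt_of_sq_le ?_)
    rw [@norm_add_sq_real, hu, hv, real_inner_comm]
    nlinarith

end UnitVector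

namespace LinearMap.IsSymmetric

variable {V : Type*} [NormedAddCommGroup V] [InnerProductSpace ℝ V] {T : V →ₗ[ℝ] V}
  (hT : T.IsSymmetric)
include hT

section Expansion

variable [FiniteDimensional ℝ V] {n : ℕ} (hn : Module.finrank ℝ V = n)

theorem norm_apply_sub_smul_sq (t : ℝ) (x : V) :
    ‖T x - t • x‖ ^ 2 =
      ∑ i, (hT.eigenvalues hn i - t) ^ 2 * ⟪hT.eigenvectorBasis hn i, x⟫ ^ 2 := by
  rw [← (hT.eigenvectorBasis hn).sum_sq_inner_right]
  refine Finset.sum_congr rfl fun i _ => ?_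
  rw [inner_sub_right, real_inner_smul_right, ← hT, hT.apply_eigenvectorBasis,
    real_inner_smul_left, RCLike.ofReal_real_eq_id, id_eq]
  ring

theorem mul_norm_le_norm_apply_sub_smul {r t : ℝ} (hr : 0 ≤ r) (x : V)
    (h : ∀ i, ⟪hT.eigenvectorBasis hn i, x⟫ ≠ 0 → r ≤ |hT.eigenvalues hn i - t|) :
    r * ‖x‖ ≤ ‖T x - t • x‖ := by
  refine (pow_le_pow_iff_left₀ (by positivity) (norm_nonneg _) two_ne_zero).mp ?_
  rw [mul_pow, hT.norm_apply_sub_smul_sq hn, ← (hT.eigenvectorBasis hn).sum_sq_inner_right,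
    Finset.mul_sum]
  refine Finset.sum_le_sum fun i _ => ?_
  by_cases hi : ⟪hT.eigenvectorBasis hn i, x⟫ = 0
  · simp [hi]
  · refine mul_le_mul_of_nonneg_right ?_ (sq_nonneg _)
    rw [← sq_abs (_ - t)]
    exact pow_le_pow_left₀ hr (h i hi) 2

theorem exists_abs_eigenvalues_sub_le {x : V} (hx : x ≠ 0) {t ε : ℝ}
    (h : ‖T x - t • x‖ ≤ ε * ‖x‖) : ∃ i, |hT.eigenvalues hn i - t| ≤ ε := by
  have : Nonempty (Fin n) := by
    have : Nontrivial V := ⟨⟨x, 0, hx⟩⟩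
    exact Fin.pos_iff_nonempty.mp (hn ▸ Module.finrank_pos)
  obtain ⟨i, hi⟩ := Finite.exists_min fun i => |hT.eigenvalues hn i - t|
  refine ⟨i, le_of_mul_le_mul_right ?_ (norm_pos_iff.mpr hx)⟩
  exact (hT.mul_norm_le_norm_apply_sub_smul hn (abs_nonneg _) x fun j _ => hi j).trans h

end Expansion

theorem eigenvalue_eq_of_inner_ne_zero {u v : V} {lam μ : ℝ} (hTu : T u = lam • u)
    (hTv : T v = μ • v) (huv : ⟪u, v⟫ ≠ 0) : μ = lam := by
  refine mul_right_cancel₀ huv ?_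
  rw [← real_inner_smul_right, ← hTv, ← hT, hTu, real_inner_smul_left]

theorem apply_sub_inner_smul {u : V} {lam : ℝ} (hTu : T u = lam • u) (w : V) :
    T (w - ⟪u, w⟫ • u) = T w - ⟪u, T w⟫ • u := by
  rw [map_sub, map_smul, hTu, ← hT, hTu, real_inner_smul_left, smul_smul, mul_comm]

section SpectralGap

variable {u : V} {lam δ : ℝ} (hu : ‖u‖ = 1) (hTu : T u = lam • u) (hδ : 0 < δ)
  (hgap : ∀ μ v, v ≠ 0 → T v = μ • v → ⟪u, v⟫ = 0 → δ ≤ |μ - lam|)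
include hu hTu hδ hgap

theorem eq_inner_smul_of_apply_eq_smul {v : V} (hTv : T v = lam • v) : v = ⟪u, v⟫ • u := by
  by_contra hne
  have hz : T (v - ⟪u, v⟫ • u) = lam • (v - ⟪u, v⟫ • u) := by
    rw [hT.apply_sub_inner_smul hTu, hTv, real_inner_smul_right, smul_sub, smul_smul, mul_comm]
  have := hgap lam _ (sub_ne_zero.mpr hne) hz (inner_sub_inner_smul_of_norm_eq_one hu v)
  rw [sub_self, abs_zero] at this
  exact this.not_gt hδ

theorem le_abs_sub_of_inner_ne_zero {w y : V} {μ : ℝ} (hTw : T w = μ • w) (hy : ⟪u, y⟫ = 0)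
    (hwy : ⟪w, y⟫ ≠ 0) : δ ≤ |μ - lam| := by
  by_cases huw : ⟪u, w⟫ = 0
  · exact hgap μ w (by rintro rfl; simp at hwy) hTw huw
  -- otherwise `w` lies in the `lam`-eigenspace, which the gap forces to be `ℝ ∙ u`
  · obtain rfl := hT.eigenvalue_eq_of_inner_ne_zero hTu hTw huw
    rw [hT.eq_inner_smul_of_apply_eq_smul hu hTu hδ hgap hTw, real_inner_smul_left, hy,
      mul_zero] at hwy
    exact (hwy rfl).elim

variable [FiniteDimensional ℝ V]

theorem mul_norm_le_norm_apply_sub_smul_of_inner_eq_zero {y : V} (hy : ⟪u, y⟫ = 0) {t : ℝ}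
    (ht : |t - lam| ≤ δ) : (δ - |t - lam|) * ‖y‖ ≤ ‖T y - t • y‖ := by
  refine hT.mul_norm_le_norm_apply_sub_smul rfl (sub_nonneg.mpr ht) y fun i hi => ?_
  have hTi : T (hT.eigenvectorBasis rfl i) = hT.eigenvalues rfl i • hT.eigenvectorBasis rfl i :=
    hT.apply_eigenvectorBasis rfl i
  have := hT.le_abs_sub_of_inner_ne_zero hu hTu hδ hgap hTi hy hi
  linarith [abs_sub_le (hT.eigenvalues rfl i) t lam]

theorem davisKahan_sin_theta {S : V →ₗ[ℝ] V} (hS : S.IsSymmetric) {ε : ℝ}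
    (hSε : ∀ x, ‖S x‖ ≤ ε * ‖x‖) (hεδ : 2 * ε < δ) :
    ∃ v lam', ‖v‖ = 1 ∧ (T + S) v = lam' • v ∧ |lam' - lam| ≤ ε ∧
      √(1 - ⟪u, v⟫ ^ 2) ≤ 2 * ε / δ := by
  have hTS := hT.add hS
  have hres : ‖(T + S) u - lam • u‖ ≤ ε * ‖u‖ := by
    rw [LinearMap.add_apply, hTu, add_sub_cancel_left]
    exact hSε u
  obtain ⟨j, hj⟩ := hTS.exists_abs_eigenvalues_sub_le rfl 
    (norm_ne_zero_iff.mp (hu ▸ one_ne_zero)) hres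
  set v := hTS.eigenvectorBasis rfl j
  set lam' := hTS.eigenvalues rfl j
  have hv : ‖v‖ = 1 := (hTS.eigenvectorBasis rfl).orthonormal.1 j
  have hTSv : (T + S) v = lam' • v := hTS.apply_eigenvectorBasis rfl j
  have hTv : T v = lam' • v - S v := eq_sub_of_add_eq hTSv
  set y := v - ⟪u, v⟫ • u
  have hy : ‖y‖ = √(1 - ⟪u, v⟫ ^ 2) := by
    rw [← Real.sqrt_sq (norm_nonneg y), norm_sub_inner_smul_sq_of_norm_eq_one hu, hv, one_pow]
  have hTy : T y - lam' • y = -(S v - ⟪u, S v⟫ • u) := by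
    rw [hT.apply_sub_inner_smul hTu, hTv, inner_sub_right, real_inner_smul_right]
    module
  have hupper : ‖T y - lam' • y‖ ≤ ε := by
    rw [hTy, norm_neg]
    calc ‖S v - ⟪u, S v⟫ • u‖ ≤ ‖S v‖ := norm_sub_inner_smul_le_of_norm_eq_one hu _
      _ ≤ ε := by simpa [hv] using hSε v
  have hlower := hT.mul_norm_le_norm_apply_sub_smul_of_inner_eq_zero hu hTu hδ hgap
    (inner_sub_inner_smul_of_norm_eq_one hu v) (hj.trans (by linarith))
  refine ⟨v, lam', hv, hTSv, hj, ?_⟩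
  rw [← hy, le_div_iff₀' hδ]
  calc δ * ‖y‖ ≤ 2 * ((δ - |lam' - lam|) * ‖y‖) := by
        linarith [mul_le_mul_of_nonneg_right (by linarith : 2 * |lam' - lam| ≤ δ) (norm_nonneg y)]
    _ ≤ 2 * ε := by linarith

end SpectralGap

end LinearMap.IsSymmetric

theorem EuclideanSpace.real_inner_toLp_toLp {ι : Type*} [Fintype ι] (x y : ι → ℝ) :
    ⟪WithLp.toLp 2 x, WithLp.toLp 2 y⟫ = ∑ i, x i * y i := by
  simp [inner_toLp_toLp, dotProduct, mul_comm]

theorem EuclideanSpace.norm_toLp_real {ι : Type*} [Fintype ι] (x : ι → ℝ) :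
    ‖WithLp.toLp 2 x‖ = √(∑ i, x i ^ 2) := by
  simp [EuclideanSpace.norm_eq]

theorem Matrix.IsSymm.isSymmetric_toEuclideanLin {ι : Type*} [Fintype ι] [DecidableEq ι]
    {M : Matrix ι ι ℝ} (hM : M.IsSymm) : (toEuclideanLin M).IsSymmetric :=
  isSymmetric_toEuclideanLin_iff.mpr (isHermitian_iff_isSymm.mpr hM)

/-- Davis–Kahan-type eigenvector perturbation bound: if `u` is a unit
`λ`-eigenvector of the symmetric matrix `A`, all other eigendirections are at
spectral distance `≥ δ` from `λ`, and `‖E‖ ≤ ε` (ℓ² operator norm) with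
`2ε < δ`, then `A + E` has a unit eigenvector `û` with eigenvalue `λ̂`
satisfying `|λ̂ - λ| ≤ ε`, `sin∠(û,u) ≤ 2ε/δ`, and
`min_{σ = ±1} ‖û - σu‖ ≤ 2√2 ε/δ`. -/
theorem stmt12 (n : ℕ) (A E : Matrix (Fin n) (Fin n) ℝ)
    (hA : A.IsSymm) (hE : E.IsSymm)
    (lam : ℝ) (u : Fin n → ℝ) (hu : ∑ i, u i ^ 2 = 1)
    (hAu : A *ᵥ u = lam • u)
    (δ : ℝ) (hδ : 0 < δ)
    (hgap : ∀ (μ : ℝ) (v : Fin n → ℝ), v ≠ 0 → A *ᵥ v = μ • v →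
      (∑ i, u i * v i) = 0 → δ ≤ |μ - lam|)
    (ε : ℝ) (hEnorm : ‖E‖ ≤ ε) (hεδ : 2 * ε < δ) :
    ∃ (uhat : Fin n → ℝ) (lamhat : ℝ),
      (∑ i, uhat i ^ 2 = 1) ∧
      (A + E) *ᵥ uhat = lamhat • uhat ∧
      |lamhat - lam| ≤ ε ∧
      Real.sqrt (1 - (∑ i, u i * uhat i) ^ 2) ≤ 2 * ε / δ ∧
      min (Real.sqrt (∑ i, (uhat i - u i) ^ 2))
          (Real.sqrt (∑ i, (uhat i + u i) ^ 2)) ≤ 2 * Real.sqrt 2 * ε / δ := by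
  set x := WithLp.toLp 2 u
  have hx : ‖x‖ = 1 := by rw [EuclideanSpace.norm_toLp_real, hu, Real.sqrt_one]
  have hTx : toEuclideanLin A x = lam • x := by rw [← WithLp.toLp_smul, ← hAu]; rfl
  have hgap' : ∀ μ w, w ≠ 0 → toEuclideanLin A w = μ • w → ⟪x, w⟫ = 0 → δ ≤ |μ - lam| :=
    fun μ w hw hAw hxw => hgap μ (WithLp.ofLp w) (by simpa using hw) (congrArg WithLp.ofLp hAw)
      (by rwa [← EuclideanSpace.real_inner_toLp_toLp])
  have hSε : ∀ w, ‖toEuclideanLin E w‖ ≤ ε * ‖w‖ := fun w =>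
    (E.l2_opNorm_mulVec w).trans (mul_le_mul_of_nonneg_right hEnorm (norm_nonneg w))
  obtain ⟨v, lamhat, hv, hBv, hlam, hsin⟩ :=
    hA.isSymmetric_toEuclideanLin.davisKahan_sin_theta hx hTx hδ hgap'
      hE.isSymmetric_toEuclideanLin hSε hεδ
  have hinner : ∑ i, u i * v i = ⟪x, v⟫ := (EuclideanSpace.real_inner_toLp_toLp _ _).symm
  refine ⟨WithLp.ofLp v, lamhat, ?_, ?_, hlam, hinner ▸ hsin, ?_⟩
  · rw [← EuclideanSpace.real_norm_sq_eq, hv, one_pow]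
  · simpa [Matrix.add_mulVec] using congrArg WithLp.ofLp hBv
  · rw [← EuclideanSpace.norm_toLp_real, ← EuclideanSpace.norm_toLp_real]
    calc _ ≤ √2 * √(1 - ⟪x, v⟫ ^ 2) := min_norm_sub_norm_add_le_of_norm_eq_one hx hv
      _ ≤ √2 * (2 * ε / δ) := by gcongr
      _ = 2 * √2 * ε / δ := by ring
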